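/- An unordered word w belongs to the language of a disjunctive multiplicity expression E if and only if w is consistent with the characterizing triple (C_E, N_E, P_E), i.e., (1) for every pair (a,b) in C_E, not both a and b occur in w; (2) for every symbol a, (a, w(a)) ∈ N_E; (3) for every set X ∈ P_E, some symbol of X occurs in w. -/

import Mathlib

open scoped Classical

variable {α : Type}

/-- Unordered words: multisets of symbols, as occurrence-count functions. -/
abbrev UWord (α : Type) := α → ℕ

/-- Multiplicities `*`, `+`, `?`, `0`, `1`. -/
inductive Mult : Type where
  | zero | one | opt | plus | star
deriving DecidableEq

/-- Interpretation of multiplicities as sets of natural numbers. -/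
def Mult.sem : Mult → Set ℕ
  | .zero => {0}
  | .one => {1}
  | .opt => {0, 1}
  | .plus => {n | 0 < n}
  | .star => Set.univ

/-- A disjunction `a₁^{M₁} | … | a_k^{M_k}`. -/
abbrev Disj (α : Type) := List (α × Mult)

/-- A disjunctive multiplicity expression `D₁^{M₁} ⊎ … ⊎ D_n^{M_n}`. -/
abbrev DME (α : Type) := List (Disj α × Mult)

/-- Language of `a^M`. -/
def singleLang (a : α) (m : Mult) : Set (UWord α) :=
  {w | w a ∈ m.sem ∧ ∀ b, b ≠ a → w b = 0}

/-- Language of a disjunction. -/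
def disjLang (D : Disj α) : Set (UWord α) :=
  {w | ∃ p ∈ D, w ∈ singleLang p.1 p.2}

/-- Pointwise (multiset) sum of a list of unordered words. -/
def sumWords (ws : List (UWord α)) : UWord α := fun a => (ws.map (fun u => u a)).sum

/-- Language of `D^M`. -/
def powLang (L : Set (UWord α)) (m : Mult) : Set (UWord α) :=
  {w | ∃ ws : List (UWord α), ws.length ∈ m.sem ∧ (∀ u ∈ ws, u ∈ L) ∧ w = sumWords ws}

/-- Language of a disjunctive multiplicity expression. -/
def dmeLang (E : DME α) : Set (UWord α) :=
  {w | ∃ ws : List (UWord α),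
      List.Forall₂ (fun p u => u ∈ powLang (disjLang p.1) p.2) E ws ∧ w = sumWords ws}

/-- Symbols occurring in a disjunctive multiplicity expression. -/
def dmeSymbols (E : DME α) : List α := E.flatMap (fun p => p.1.map Prod.fst)

/-- Normalized disjunctive multiplicity expression (each symbol occurs at most once,
each disjunction nonempty, and the two normal-form conditions of the paper). -/
def Normalized (E : DME α) : Prop :=
  (dmeSymbols E).Nodup ∧
  ∀ p ∈ E, p.1 ≠ [] ∧
    (p.2 ≠ Mult.one → p.2 = Mult.plus ∧ ∀ q ∈ p.1, q.2 = Mult.one) ∧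
    ((∃ q ∈ p.1, (0 : ℕ) ∈ q.2.sem) → ∀ q ∈ p.1, (0 : ℕ) ∈ q.2.sem)

/-- Conflicting pairs of siblings `C_E`. -/
def CE (E : DME α) : Set (α × α) :=
  {p | ¬ ∃ w ∈ dmeLang E, w p.1 ≠ 0 ∧ w p.2 ≠ 0}

/-- Extended cardinality map `N_E`. -/
def NE (E : DME α) : Set (α × ℕ) :=
  {p | ∃ w ∈ dmeLang E, w p.1 = p.2}

/-- Sets of required symbols `P_E`. -/
def PE (E : DME α) : Set (Set α) :=
  {X | ∀ w ∈ dmeLang E, ∃ a ∈ X, w a ≠ 0}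

/-- Consistency of an unordered word with a characterizing triple. -/
def ConsTriple (w : UWord α) (C : Set (α × α)) (N : Set (α × ℕ)) (P : Set (Set α)) : Prop :=
  (∀ p ∈ C, ¬ (w p.1 ≠ 0 ∧ w p.2 ≠ 0)) ∧
  (∀ a, (a, w a) ∈ N) ∧
  (∀ X ∈ P, ∃ a ∈ X, w a ≠ 0)

/-- Language of a disjunction-free multiplicity expression given as a list of
symbol/multiplicity pairs. -/
def dfLang (l : List (α × Mult)) : Set (UWord α) :=
  {w | (∀ p ∈ l, w p.1 ∈ p.2.sem) ∧ ∀ b, b ∉ l.map Prod.fst → w b = 0}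

/-- Finite unordered trees. -/
inductive UTree (α : Type) : Type where
  | node : α → List (UTree α) → UTree α

def UTree.lab : UTree α → α | .node a _ => a

def UTree.children : UTree α → List (UTree α) | .node _ ts => ts

/-- Twig queries: labels in `Σ ∪ {⋆}` (wildcard = `none`); each child subquery is tagged
with `false` for a child edge and `true` for a descendant edge. -/
inductive Twig (α : Type) : Type where
  | node : Option α → List (Twig α × Bool) → Twig α

/-- Proper subtree (proper descendant) relation. -/
inductive StrictDesc : UTree α → UTree α → Prop where
  | child {s t : UTree α} : s ∈ t.children → StrictDesc s t
  | step {s u t : UTree α} : StrictDesc s u → u ∈ t.children → StrictDesc s t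

/-- `Sat t q`: the twig query `q` can be embedded in the tree `t`
(root to root, child edges to child edges, descendant edges to proper descendants,
labels preserved up to wildcard). -/
def Sat : UTree α → Twig α → Prop
  | t, .node l qs =>
      (∀ x ∈ l, x = t.lab) ∧
      ∀ p ∈ qs, (p.2 = false → ∃ t' ∈ t.children, Sat t' p.1) ∧
                (p.2 = true → ∃ t', StrictDesc t' t ∧ Sat t' p.1)
termination_by t q => sizeOf q
decreasing_by
  all_goals
    obtain ⟨q', b'⟩ := p
    have h1 : sizeOf ((q', b') : Twig α × Bool) < sizeOf qs := List.sizeOf_lt_of_mem (by assumption)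
    simp at h1 ⊢
    omega

/-- `TEmb t' t` : the tree `t'` can be embedded in the tree `t` (root-, child-, and
label-preserving). -/
def TEmb : UTree α → UTree α → Prop
  | .node a ts', t => t.lab = a ∧ ∀ s' ∈ ts', ∃ s ∈ t.children, TEmb s' s

/-- `QGEmb E a q` : the twig query `q` can be embedded in the rooted graph with edge
relation `E` at root `a`. -/
def QGEmb (E : α → α → Prop) : α → Twig α → Prop
  | a, .node l qs =>
      (∀ x ∈ l, x = a) ∧
      ∀ p ∈ qs, (p.2 = false → ∃ b, E a b ∧ QGEmb E b p.1) ∧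
                (p.2 = true → ∃ b, Relation.TransGen E a b ∧ QGEmb E b p.1)
termination_by a q => sizeOf q
decreasing_by
  all_goals
    obtain ⟨q', b'⟩ := p
    have h1 : sizeOf ((q', b') : Twig α × Bool) < sizeOf qs := List.sizeOf_lt_of_mem (by assumption)
    simp at h1 ⊢
    omega

/-- Labeled paths of a tree: sequences of labels along root-to-node paths. -/
inductive IsLabPath : UTree α → List α → Prop where
  | root {a : α} {ts : List (UTree α)} : IsLabPath (UTree.node a ts) [a]
  | cons {a : α} {ts : List (UTree α)} {s : UTree α} {p : List α} :
      s ∈ ts → IsLabPath s p → IsLabPath (UTree.node a ts) (a :: p)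

/-- Paths of a rooted graph: nonempty vertex sequences starting at the root and
following edges. -/
def IsGPath (E : α → α → Prop) (root : α) (p : List α) : Prop :=
  p ≠ [] ∧ p.head? = some root ∧ p.Chain' E

/-- The unfolding of a rooted graph, truncated at depth `n`.  For a graph with no cycle
reachable from the root, taking `n = Fintype.card α` yields the full unfolding. -/
noncomputable def unfoldG [Fintype α] (E : α → α → Prop) : ℕ → α → UTree α
  | 0, a => .node a []
  | n + 1, a => .node a (((Finset.univ.filter fun b => E a b).toList).map (unfoldG E n))

/-- Number of leaves of a tree. -/
def leafCount : UTree α → ℕ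
  | .node _ ts => if ts.isEmpty then 1 else (ts.attach.map (fun s => leafCount s.1)).sum
decreasing_by
  have h1 := List.sizeOf_lt_of_mem s.2
  simp
  omega

/-- Disjunction-free multiplicity schema: a root label together with, for each label `a`,
a disjunction-free multiplicity expression given as the multiplicity `R a b` of every
symbol `b` (`Mult.zero` meaning `b` does not occur). -/
structure MS (α : Type) where
  root : α
  R : α → α → Mult

/-- Every node's children-label multiset matches the rule for the node's label. -/
inductive LocalOK [DecidableEq α] (R : α → α → Mult) : UTree α → Prop where
  | node {a : α} {ts : List (UTree α)} :
      (∀ b, ((ts.map UTree.lab).count b) ∈ (R a b).sem) →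
      (∀ s ∈ ts, LocalOK R s) →
      LocalOK R (UTree.node a ts)

/-- A tree satisfies a disjunction-free multiplicity schema. -/
def SatS [DecidableEq α] (S : MS α) (t : UTree α) : Prop :=
  t.lab = S.root ∧ LocalOK S.R t

/-- Edges of the universal dependency graph: `b` occurs in `R a` with multiplicity `+` or `1`. -/
def uEdge (S : MS α) (a b : α) : Prop := S.R a b = Mult.plus ∨ S.R a b = Mult.one

/-- Edges of the dependency graph: `b` occurs in `R a` with multiplicity in `{*,+,?,1}`. -/
def dEdge (S : MS α) (a b : α) : Prop := S.R a b ≠ Mult.zero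

/-- A simulation of the rooted graph `(α, root, E)` in the tree `t`. -/
def IsSimulation (E : α → α → Prop) (root : α) (t : UTree α) (R : α → UTree α → Prop) : Prop :=
  R root t ∧ (∀ a s, R a s → s.lab = a) ∧
  (∀ a s, R a s → ∀ b, E a b → ∃ s' ∈ s.children, R b s')

/-- One fuse step: two sibling nodes with the same label are merged into a single node
whose children are the children of both (applied anywhere in the tree). -/
inductive Fuse : UTree α → UTree α → Prop where
  | here {a b : α} {l₁ l₂ l₃ cs₁ cs₂ : List (UTree α)} :
      Fuse (UTree.node a (l₁ ++ UTree.node b cs₁ :: l₂ ++ UTree.node b cs₂ :: l₃))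
           (UTree.node a (l₁ ++ UTree.node b (cs₁ ++ cs₂) :: l₂ ++ l₃))
  | there {a : α} {s s' : UTree α} {l₁ l₂ : List (UTree α)} :
      Fuse s s' → Fuse (UTree.node a (l₁ ++ s :: l₂)) (UTree.node a (l₁ ++ s' :: l₂))

/-- One add step: an arbitrary new subtree is attached as an additional child of some
node of the tree. -/
inductive AddOp : UTree α → UTree α → Prop where
  | here {a : α} {s : UTree α} {l : List (UTree α)} :
      AddOp (UTree.node a l) (UTree.node a (s :: l))
  | there {a : α} {s s' : UTree α} {l₁ l₂ : List (UTree α)} :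
      AddOp s s' → AddOp (UTree.node a (l₁ ++ s :: l₂)) (UTree.node a (l₁ ++ s' :: l₂))

/-
A word lies in `L(E)` exactly when it vanishes off the symbols of `E` and its restriction to the
symbols of each disjunction `D^M` lies in `L(D^M)`; this uses that distinct disjunctions have
disjoint alphabets. In normal form `D^M` is either `D^1`, a choice of one symbol `a^{M'}`, or
`D^+` with every `a ∈ D` of multiplicity `1`, i.e. any nonzero word over the symbols of `D`.
For a word consistent with the triple, `N_E` gives the count of a symbol occurring in a `D^1`
block (and zero counts off the symbols of `E`), `C_E` forbids two symbols of a `D^1` block to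
occur together, and `P_E` forbids an empty restriction when `L(D^M)` excludes it.
-/

def disjSymbols (D : Disj α) : Set α := {a | a ∈ D.map Prod.fst}

lemma sumWords_eq_sum (ws : List (UWord α)) : sumWords ws = ws.sum :=
  funext fun a => (Pi.list_sum_apply a ws).symm

lemma powLang_one (L : Set (UWord α)) : powLang L Mult.one = L := by
  ext u
  simp only [powLang, Mult.sem, Set.mem_singleton_iff, List.length_eq_one_iff, sumWords_eq_sum]
  constructor
  · rintro ⟨_, ⟨v, rfl⟩, hv, rfl⟩
    simpa using hv
  · intro hu
    exact ⟨[u], ⟨u, rfl⟩, by simpa using hu, by simp⟩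

lemma powLang_apply_eq_zero {L : Set (UWord α)} {b : α} (hL : ∀ u ∈ L, u b = 0) {m : Mult}
    {u : UWord α} (hu : u ∈ powLang L m) : u b = 0 := by
  obtain ⟨ws, -, hws, rfl⟩ := hu
  rw [sumWords_eq_sum, Pi.list_sum_apply]
  exact List.sum_eq_zero fun n hn => by
    obtain ⟨v, hv, rfl⟩ := List.mem_map.mp hn
    exact hL v (hws v hv)

lemma eq_of_mem_singleLang {c : α} {m : Mult} {u : UWord α} (hu : u ∈ singleLang c m) {a : α}
    (ha : u a ≠ 0) : a = c :=
  by_contra fun h => ha (hu.2 a h)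

lemma eq_of_mem_disjLang {D : Disj α} {u : UWord α} (hu : u ∈ disjLang D) {a b : α}
    (ha : u a ≠ 0) (hb : u b ≠ 0) : a = b := by
  obtain ⟨_, -, hu⟩ := hu
  rw [eq_of_mem_singleLang hu ha, eq_of_mem_singleLang hu hb]

lemma disjLang_apply_eq_zero {D : Disj α} {b : α} (hb : b ∉ disjSymbols D) {u : UWord α}
    (hu : u ∈ disjLang D) : u b = 0 := by
  obtain ⟨q, hq, hu⟩ := hu
  by_contra hub
  exact hb (eq_of_mem_singleLang hu hub ▸ List.mem_map_of_mem hq)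

lemma sum_flatMap_replicate_single {s : Finset α} {u : UWord α} (hu : ∀ b ∉ s, u b = 0) :
    (s.toList.flatMap fun a => List.replicate (u a) (Pi.single a 1)).sum = u := by
  funext b
  rw [List.flatMap, List.sum_flatten, List.map_map]
  by_cases hb : b ∈ s <;> simp [Function.comp_def, Finset.sum_map_toList, Pi.single_apply, hb, hu]

lemma mem_powLang_plus {D : Disj α} (hD : ∀ q ∈ D, q.2 = Mult.one) {u : UWord α}
    (hsupp : ∀ b ∉ disjSymbols D, u b = 0) (hu : u ≠ 0) :
    u ∈ powLang (disjLang D) Mult.plus := by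
  set ws := (D.map Prod.fst).toFinset.toList.flatMap
    fun a => List.replicate (u a) (Pi.single a 1)
  have hws : ws.sum = u :=
    sum_flatMap_replicate_single fun b hb => hsupp b (by simpa [disjSymbols] using hb)
  refine ⟨ws, List.length_pos_iff.2 fun h => hu (by rw [← hws, h, List.sum_nil]), ?_,
    (hws ▸ sumWords_eq_sum ws).symm⟩
  intro v hv
  obtain ⟨a, ha, hv⟩ := List.mem_flatMap.1 hv
  obtain ⟨q, hq, rfl⟩ := List.mem_map.1 (List.mem_toFinset.1 (Finset.mem_toList.1 ha))
  rw [(List.mem_replicate.1 hv).2]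
  refine ⟨q, hq, ?_, fun b hb => Pi.single_eq_of_ne hb 1⟩
  simp [hD q hq, Mult.sem]

lemma dmeLang_nil : dmeLang ([] : DME α) = {0} := by
  ext w
  simp [dmeLang, sumWords_eq_sum]

lemma dmeLang_cons (p : Disj α × Mult) (E : DME α) :
    dmeLang (p :: E) = {w | ∃ u ∈ powLang (disjLang p.1) p.2, ∃ v ∈ dmeLang E, w = u + v} := by
  ext w
  simp only [dmeLang, List.forall₂_cons_left_iff, sumWords_eq_sum, Set.mem_ofPred_eq]
  constructor
  · rintro ⟨_, ⟨u, ws, hu, hws, rfl⟩, rfl⟩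
    exact ⟨u, hu, _, ⟨ws, hws, rfl⟩, List.sum_cons⟩
  · rintro ⟨u, hu, _, ⟨ws, hws, rfl⟩, rfl⟩
    exact ⟨u :: ws, ⟨u, ws, hu, hws, rfl⟩, List.sum_cons.symm⟩

lemma exists_add_iff_indicator {S : Set α} {A B : Set (UWord α)}
    (hA : ∀ u ∈ A, ∀ b ∉ S, u b = 0) (hB : ∀ v ∈ B, ∀ b ∈ S, v b = 0) (w : UWord α) :
    (∃ u ∈ A, ∃ v ∈ B, w = u + v) ↔ S.indicator w ∈ A ∧ Sᶜ.indicator w ∈ B := by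
  constructor
  · rintro ⟨u, hu, v, hv, rfl⟩
    have hSu : S.indicator (u + v) = u := by
      funext b
      by_cases hb : b ∈ S <;> simp [hb, hA u hu, hB v hv]
    have hSv : Sᶜ.indicator (u + v) = v := by
      funext b
      by_cases hb : b ∈ S <;> simp [hb, hA u hu, hB v hv]
    rw [hSu, hSv]
    exact ⟨hu, hv⟩
  · rintro ⟨hu, hv⟩
    exact ⟨_, hu, _, hv, (S.indicator_self_add_compl w).symm⟩

lemma mem_dmeLang_iff {E : DME α} (hE : (dmeSymbols E).Nodup) {w : UWord α} :
    w ∈ dmeLang E ↔ (∀ b ∉ dmeSymbols E, w b = 0) ∧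
      ∀ p ∈ E, (disjSymbols p.1).indicator w ∈ powLang (disjLang p.1) p.2 := by
  induction E generalizing w with
  | nil => simp [dmeLang_nil, dmeSymbols, funext_iff]
  | cons p E ih =>
    have hsyms : dmeSymbols (p :: E) = p.1.map Prod.fst ++ dmeSymbols E := by simp [dmeSymbols]
    rw [hsyms, List.nodup_append] at hE
    obtain ⟨-, hE, hdisj⟩ := hE
    set S := disjSymbols p.1
    have hSE : ∀ b ∈ S, b ∉ dmeSymbols E := fun b hb hbE => hdisj b hb b hbE rfl
    have hA : ∀ u ∈ powLang (disjLang p.1) p.2, ∀ b ∉ S, u b = 0 :=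
      fun u hu b hb => powLang_apply_eq_zero (fun _ => disjLang_apply_eq_zero hb) hu
    have hB : ∀ v ∈ dmeLang E, ∀ b ∈ S, v b = 0 :=
      fun v hv b hb => ((ih hE).1 hv).1 b (hSE b hb)
    have hblock : ∀ q ∈ E, (disjSymbols q.1).indicator (Sᶜ.indicator w) =
        (disjSymbols q.1).indicator w := fun q hq => by
      rw [Set.indicator_indicator, Set.inter_eq_left.2]
      exact fun b hb hbS => hSE b hbS (List.mem_flatMap.2 ⟨q, hq, hb⟩)
    have hsupp : (∀ b ∉ dmeSymbols E, Sᶜ.indicator w b = 0) ↔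
        ∀ b ∉ dmeSymbols (p :: E), w b = 0 := by
      simp only [hsyms, List.mem_append, Set.indicator_apply_eq_zero, Set.mem_compl_iff]
      exact ⟨fun h b hb => h b (fun h' => hb (Or.inr h')) (fun h' => hb (Or.inl h')),
        fun h b hbE hbS => h b (fun h' => h'.elim hbS hbE)⟩
    rw [dmeLang_cons, Set.mem_ofPred_eq, exists_add_iff_indicator hA hB, ih hE, hsupp,
      List.forall_mem_cons]
    constructor
    · rintro ⟨hp, hw, hrest⟩
      exact ⟨hw, hp, fun q hq => hblock q hq ▸ hrest q hq⟩
    · rintro ⟨hw, hp, hrest⟩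
      exact ⟨hp, hw, fun q hq => (hblock q hq).symm ▸ hrest q hq⟩

lemma consTriple_of_mem_dmeLang {E : DME α} {w : UWord α} (hw : w ∈ dmeLang E) :
    ConsTriple w (CE E) (NE E) (PE E) :=
  ⟨fun _ hp hcon => hp ⟨w, hw, hcon⟩, fun _ => ⟨w, hw, rfl⟩, fun _ hX => hX w hw⟩

section Block

variable {E : DME α} {S : Set α} {B : Set (UWord α)} {w : UWord α}

lemma mem_PE_of_indicator_mem (hB : ∀ w' ∈ dmeLang E, S.indicator w' ∈ B)
    (h0 : (0 : UWord α) ∉ B) : S ∈ PE E := by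
  intro w' hw'
  by_contra! h
  refine h0 ?_
  rw [← show S.indicator w' = 0 from funext fun b => Set.indicator_apply_eq_zero.2 (h b)]
  exact hB w' hw'

lemma indicator_mem_of_consTriple (hB : ∀ w' ∈ dmeLang E, S.indicator w' ∈ B)
    (hw : ConsTriple w (CE E) (NE E) (PE E)) (hne : (∃ a ∈ S, w a ≠ 0) → S.indicator w ∈ B) :
    S.indicator w ∈ B := by
  by_cases h : ∃ a ∈ S, w a ≠ 0
  · exact hne h
  have h0 : (0 : UWord α) ∈ B := by_contra fun h0 => h (hw.2.2 S (mem_PE_of_indicator_mem hB h0))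
  rwa [show S.indicator w = 0 from funext fun b => Set.indicator_apply_eq_zero.2 fun hb =>
    by_contra fun hwb => h ⟨b, hb, hwb⟩]

lemma indicator_mem_disjLang_of_consTriple {D : Disj α}
    (hB : ∀ w' ∈ dmeLang E, (disjSymbols D).indicator w' ∈ disjLang D)
    (hw : ConsTriple w (CE E) (NE E) (PE E)) :
    (disjSymbols D).indicator w ∈ disjLang D := by
  refine indicator_mem_of_consTriple hB hw fun ⟨a, ha, hwa⟩ => ?_
  obtain ⟨w', hw', hw'a : w' a = w a⟩ := hw.2.1 a
  obtain ⟨⟨c, m⟩, hcm, hc⟩ := hB w' hw'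
  have hca : (disjSymbols D).indicator w' a = w a := by rw [Set.indicator_of_mem ha, hw'a]
  obtain rfl := eq_of_mem_singleLang hc (hca ▸ hwa)
  refine ⟨(a, m), hcm, by rw [Set.indicator_of_mem ha, ← hca]; exact hc.1, fun b hba => ?_⟩
  refine Set.indicator_apply_eq_zero.2 fun hb => by_contra fun hwb => hw.1 (a, b) ?_ ⟨hwa, hwb⟩
  rintro ⟨w'', hw'', hw''a, hw''b⟩
  exact hba (eq_of_mem_disjLang (hB w'' hw'') (by rwa [Set.indicator_of_mem hb])
    (by rwa [Set.indicator_of_mem ha]))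

lemma indicator_mem_powLang_plus_of_consTriple {D : Disj α} (hD : ∀ q ∈ D, q.2 = Mult.one)
    (hB : ∀ w' ∈ dmeLang E, (disjSymbols D).indicator w' ∈ powLang (disjLang D) Mult.plus)
    (hw : ConsTriple w (CE E) (NE E) (PE E)) :
    (disjSymbols D).indicator w ∈ powLang (disjLang D) Mult.plus := by
  refine indicator_mem_of_consTriple hB hw fun ⟨a, ha, hwa⟩ =>
    mem_powLang_plus hD (fun b hb => Set.indicator_of_notMem hb w) fun h => hwa ?_
  simpa [Set.indicator_of_mem ha] using congr_fun h a

end Block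

/-- Lemma 1: an unordered word belongs to the language of a (normalized)
disjunctive multiplicity expression iff it is consistent with its characterizing triple. -/
theorem dme_membership_iff_consistent_with_triple
    {α : Type} (E : DME α) (hE : Normalized E) (w : UWord α) :
    w ∈ dmeLang E ↔ ConsTriple w (CE E) (NE E) (PE E) := by
  obtain ⟨hnd, hnorm⟩ := hE
  refine ⟨consTriple_of_mem_dmeLang,
    fun hw => (mem_dmeLang_iff hnd).2 ⟨fun b hb => ?_, fun p hp => ?_⟩⟩
  · obtain ⟨w', hw', hw'b : w' b = w b⟩ := hw.2.1 b
    rw [← hw'b]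
    exact ((mem_dmeLang_iff hnd).1 hw').1 b hb
  have hB : ∀ w' ∈ dmeLang E, (disjSymbols p.1).indicator w' ∈ powLang (disjLang p.1) p.2 :=
    fun w' hw' => ((mem_dmeLang_iff hnd).1 hw').2 p hp
  obtain ⟨-, hmult, -⟩ := hnorm p hp
  by_cases hone : p.2 = Mult.one
  · rw [hone, powLang_one] at hB ⊢
    exact indicator_mem_disjLang_of_consTriple hB hw
  · obtain ⟨hplus, hall⟩ := hmult hone
    rw [hplus] at hB ⊢
    exact indicator_mem_powLang_plus_of_consTriple hall hB hw
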